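/- arXiv:0904.4678 — 2 statements merged into one kernel-verified Lean document; each statement's English description precedes it below -/
import Mathlib

section
/- There exists a constant C, depending only on the Lipschitz constant M of f, the growth constant K, the length b − a, and the total variation V_a^b L, such that for every n ∈ ℕ, every t ∈ T and every l ∈ ℕ with t + l h_n ∈ T, the solution x_n of the difference scheme satisfies |x_n(t + l h_n) − x_n(t)| ≤ C(1 + |x_n^0(τ_t)|) V_t^{t + l h_n + 1/n} L. -/
open MeasureTheory Filter Set Topology

noncomputable section

/-- The point `τ_t ∈ [a, a+h)` with `t - τ_t ∈ h·ℤ`. -/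
def tauPt (a h t : ℝ) : ℝ := a + h * Int.fract ((t - a) / h)

/-- `ρ` is a δ-sequence: smooth, nonnegative, supported in `[0, 1/n]`, total integral 1. -/
def IsDeltaSeq (ρ : ℕ → ℝ → ℝ) : Prop :=
  ∀ n : ℕ, 0 < n →
    ContDiff ℝ (⊤ : ℕ∞) (ρ n) ∧ (∀ s, 0 ≤ ρ n s) ∧
    (∀ s, s ∉ Set.Icc (0 : ℝ) (1 / (n : ℝ)) → ρ n s = 0) ∧
    (∫ s in (0 : ℝ)..(1 / (n : ℝ)), ρ n s) = 1

/-- `ρ₂` is a two-dimensional δ-sequence supported in `[0, 1/n]²`. -/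
def IsDeltaSeq2 (ρ₂ : ℕ → ℝ → ℝ → ℝ) : Prop :=
  ∀ n : ℕ, 0 < n →
    ContDiff ℝ (⊤ : ℕ∞) (fun p : ℝ × ℝ => ρ₂ n p.1 p.2) ∧ (∀ u v, 0 ≤ ρ₂ n u v) ∧
    (∀ u v, (u, v) ∉ Set.Icc (0 : ℝ) (1 / (n : ℝ)) ×ˢ Set.Icc (0 : ℝ) (1 / (n : ℝ)) → ρ₂ n u v = 0) ∧
    (∫ u in (0 : ℝ)..(1 / (n : ℝ)), ∫ v in (0 : ℝ)..(1 / (n : ℝ)), ρ₂ n u v) = 1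

/-- Mollification `L_n = L * ρ_n`. -/
def mollL (L : ℝ → ℝ) (ρ : ℕ → ℝ → ℝ) (n : ℕ) (t : ℝ) : ℝ :=
  ∫ s in (0 : ℝ)..(1 / (n : ℝ)), L (t + s) * ρ n s

/-- Mollification `f_n = f * ρ̃_n`. -/
def mollF (f : ℝ → ℝ → ℝ) (ρ₂ : ℕ → ℝ → ℝ → ℝ) (n : ℕ) (t x : ℝ) : ℝ :=
  ∫ u in (0 : ℝ)..(1 / (n : ℝ)), ∫ v in (0 : ℝ)..(1 / (n : ℝ)), f (t + u) (x + v) * ρ₂ n u v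

/-- `F_n(x) = ∫_x^{1/n} ρ_n(s) ds`. -/
def Fcdf (ρ : ℕ → ℝ → ℝ) (n : ℕ) (x : ℝ) : ℝ := ∫ s in x..(1 / (n : ℝ)), ρ n s

/-- Extension of `F_n` to `[-∞, +∞]`. -/
def FcdfE (ρ : ℕ → ℝ → ℝ) (n : ℕ) (x : EReal) : ℝ :=
  if x = ⊤ then 0 else if x = ⊥ then 1 else Fcdf ρ n x.toReal

/-- `F_n^{-1}(u) = sup {x : F_n(x) = u}`, as an element of `[-∞, +∞]`. -/
def FcdfInv (ρ : ℕ → ℝ → ℝ) (n : ℕ) (u : ℝ) : EReal :=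
  sSup {x : EReal | FcdfE ρ n x = u}

/-- Membership in the class `G`. -/
def MemClassG (σ : ℝ → ℝ) : Prop :=
  ∃ (ι : Type) (A B : ι → ℝ),
    (∀ i, Set.Ioc (A i) (B i) ⊆ Set.Icc 0 1) ∧
    (Pairwise fun i j => Disjoint (Set.Ioc (A i) (B i)) (Set.Ioc (A j) (B j))) ∧
    ∀ u ∈ Set.Icc (0 : ℝ) 1,
      (∀ i, u ∈ Set.Ioc (A i) (B i) → σ u = B i) ∧
      ((∀ i, u ∉ Set.Ioc (A i) (B i)) → σ u = u)

/-- Jump `ΔL(s) = L(s+) - L(s-)` of `L` at `s`. -/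
def jumpAt (L : ℝ → ℝ) (s : ℝ) : ℝ := Function.rightLim L s - Function.leftLim L s

/-- Continuous part `L^c` of `L`:  `L^c(t) = L(t) - Σ_{a < s ≤ t} ΔL(s)`. -/
def contPart (L : ℝ → ℝ) (a t : ℝ) : ℝ :=
  L t - ∑' s : ℝ, (Set.Ioc a t).indicator (jumpAt L) s

/-- Step function `σⁿ` associated with a partition `ξ`:  `σⁿ(u) = ξ_k` for
`ξ_{k-1} < u ≤ ξ_k`, and `σⁿ(0) = 0`. -/
def stepOf (ξ : ℕ → ℝ) (u : ℝ) : ℝ := if u = 0 then 0 else ξ (sInf {k | u ≤ ξ k})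

/-- The Euler iterates `φ_k` along the partition `ξ`. -/
def phiIter (z : ℝ → ℝ) (x : ℝ) (ξ : ℕ → ℝ) : ℕ → ℝ
  | 0 => x
  | k + 1 => phiIter z x ξ k + z (phiIter z x ξ k) * (ξ (k + 1) - ξ k)

/-- Step function `φⁿ` of the Euler iterates:  `φⁿ(u) = φ_k` for `ξ_{k-1} < u ≤ ξ_k`,
and `φⁿ(0) = x`. -/
def phiStepOf (z : ℝ → ℝ) (x : ℝ) (ξ : ℕ → ℝ) (u : ℝ) : ℝ :=
  if u = 0 then x else phiIter z x ξ (sInf {k | u ≤ ξ k})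

/-- The Lebesgue–Stieltjes measure generated by the step function of the partition
`0 = ξ_0 ≤ ξ_1 ≤ … ≤ ξ_{m+2} = 1`. -/
def partMeasure (ξ : ℕ → ℝ) (m : ℕ) : Measure ℝ :=
  ∑ k ∈ Finset.range (m + 2), ENNReal.ofReal (ξ (k + 1) - ξ k) • Measure.dirac (ξ k)

/-- The auxiliary Lipschitz functions `z_{q,ε}`. -/
def zqe (x q ε : ℝ) (p : ℝ) : ℝ :=
  if p ≤ x + q then 1 else if p ≤ x + q + ε then (x + q + ε - p) / ε else 0

lemma aux_tau {a h t : ℝ} (hh : 0 < h) (hat : a ≤ t) :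
    a ≤ tauPt a h t ∧ tauPt a h t < a + h ∧ ∃ m : ℕ, t = tauPt a h t + (m : ℝ) * h := by
  have h1 : 0 ≤ Int.fract ((t - a) / h) := Int.fract_nonneg _
  have h2 : Int.fract ((t - a) / h) < 1 := Int.fract_lt_one _
  refine ⟨by unfold tauPt; nlinarith, by unfold tauPt; nlinarith, ?_⟩
  have hfl : (0 : ℤ) ≤ ⌊(t - a) / h⌋ :=
    Int.floor_nonneg.2 (div_nonneg (by linarith) hh.le)
  refine ⟨⌊(t - a) / h⌋.toNat, ?_⟩
  have hcast : ((⌊(t - a) / h⌋.toNat : ℕ) : ℝ) = ((⌊(t - a) / h⌋ : ℤ) : ℝ) := by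
    norm_cast
    exact Int.toNat_of_nonneg hfl
  have hfr : Int.fract ((t - a) / h) = (t - a) / h - ⌊(t - a) / h⌋ := (Int.self_sub_floor _).symm
  have hdiv : h * ((t - a) / h) = t - a := mul_div_cancel₀ _ hh.ne'
  rw [tauPt, hcast, hfr]
  nlinarith [hdiv]

lemma aux_meas {L : ℝ → ℝ} {a b : ℝ} (hab : a ≤ b)
    (hbv : BoundedVariationOn L (Set.Icc a b))
    (hLa : ∀ t, t ≤ a → L t = L a) (hLb : ∀ t, b ≤ t → L t = L b) :
    Measurable L ∧ eVariationOn L Set.univ ≤ eVariationOn L (Set.Icc a b) := by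
  set φ : ℝ → ℝ := fun t => min b (max a t) with hφdef
  have hφm : Monotone φ := monotone_const.min (monotone_const.max monotone_id)
  have hmaps : ∀ t : ℝ, φ t ∈ Set.Icc a b := fun t =>
    ⟨le_min hab (le_max_left a t), min_le_left _ _⟩
  have hLφ : ∀ t, L (φ t) = L t := by
    intro t
    rcases le_total t a with h' | h'
    · have : φ t = a := by
        simp only [hφdef, max_eq_left h', min_eq_right hab]
      rw [this, (hLa t h').symm]
    · rcases le_total t b with h'' | h''
      · have : φ t = t := by
          simp only [hφdef, max_eq_right h', min_eq_right h'']
        rw [this]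
      · have : φ t = b := by
          simp only [hφdef, max_eq_right h', min_eq_left h'']
        rw [this, (hLb t h'').symm]
  have heq : eVariationOn (L ∘ φ) Set.univ = eVariationOn L Set.univ :=
    eVariationOn.eq_of_eqOn (fun x _ => hLφ x)
  have hle : eVariationOn (L ∘ φ) Set.univ ≤ eVariationOn L (Set.Icc a b) :=
    eVariationOn.comp_le_of_monotoneOn L φ (hφm.monotoneOn _) (fun t _ => hmaps t)
  have hVu : eVariationOn L Set.univ ≤ eVariationOn L (Set.Icc a b) := heq ▸ hle
  have hbvu : BoundedVariationOn L Set.univ := ne_top_of_le_ne_top hbv hVu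
  obtain ⟨p, q, hp, hq, hpq⟩ :=
    hbvu.locallyBoundedVariationOn.exists_monotoneOn_sub_monotoneOn
  refine ⟨?_, hVu⟩
  rw [hpq]
  exact ((monotoneOn_univ.1 hp).measurable).sub ((monotoneOn_univ.1 hq).measurable)

lemma aux_Lbound {L : ℝ → ℝ} {a b : ℝ}
    (hbv : BoundedVariationOn L (Set.Icc a b))
    (hVu : eVariationOn L Set.univ ≤ eVariationOn L (Set.Icc a b)) :
    ∀ x, |L x| ≤ |L a| + (eVariationOn L (Set.Icc a b)).toReal := by
  intro x
  have h1 : edist (L x) (L a) ≤ eVariationOn L (Set.Icc a b) :=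
    (eVariationOn.edist_le L (Set.mem_univ x) (Set.mem_univ a)).trans hVu
  have h2 : dist (L x) (L a) ≤ (eVariationOn L (Set.Icc a b)).toReal := by
    have := ENNReal.toReal_mono hbv h1
    rwa [edist_dist, ENNReal.toReal_ofReal dist_nonneg] at this
  rw [Real.dist_eq] at h2
  calc |L x| = |L a + (L x - L a)| := by ring_nf
    _ ≤ |L a| + |L x - L a| := abs_add_le _ _
    _ ≤ _ := by linarith


set_option maxHeartbeats 1000000 in
lemma aux_sumD {L : ℝ → ℝ} (hLm : Measurable L) {B : ℝ} (hB : ∀ x, |L x| ≤ B)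
    {ρ : ℕ → ℝ → ℝ} {n : ℕ}
    (hρc : Continuous (ρ n)) (hρ0 : ∀ s, 0 ≤ ρ n s)
    (hρ1 : (∫ s in (0:ℝ)..(1/(n:ℝ)), ρ n s) = 1)
    {h : ℝ} (hh : 0 ≤ h) (c : ℝ) (k : ℕ)
    (hfin : eVariationOn L (Set.Icc c (c + k * h + 1/(n:ℝ))) ≠ ⊤) :
    ∑ j ∈ Finset.range k,
        |mollL L ρ n (c + ((j : ℝ) + 1) * h) - mollL L ρ n (c + (j : ℝ) * h)| ≤
      (eVariationOn L (Set.Icc c (c + k * h + 1/(n:ℝ)))).toReal := by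
  set δ : ℝ := 1/(n:ℝ) with hδdef
  set W : ℝ := (eVariationOn L (Set.Icc c (c + k * h + δ))).toReal with hWdef
  clear_value δ W
  have hδ : 0 ≤ δ := by rw [hδdef]; positivity
  -- pointwise variation bound
  have pointsum : ∀ u ∈ Set.Icc (0:ℝ) δ,
      (∑ j ∈ Finset.range k, |L (c + ((j:ℝ)+1)*h + u) - L (c + (j:ℝ)*h + u)|) ≤ W := by
    intro u hu
    set e : ℕ → ℝ := fun j => c + ((min j k : ℕ) : ℝ) * h + u with hedef
    have hmono : Monotone e := by
      intro i j hij
      have : ((min i k : ℕ) : ℝ) ≤ ((min j k : ℕ) : ℝ) := by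
        exact_mod_cast min_le_min hij le_rfl
      simp only [hedef]
      nlinarith
    have hmem : ∀ i, e i ∈ Set.Icc c (c + (k:ℝ) * h + δ) := by
      intro i
      have h1 : ((min i k : ℕ) : ℝ) ≤ (k : ℝ) := by exact_mod_cast min_le_right i k
      have h0 : (0:ℝ) ≤ ((min i k : ℕ) : ℝ) := Nat.cast_nonneg _
      constructor
      · simp only [hedef]; nlinarith [hu.1]
      · simp only [hedef]; nlinarith [hu.2]
    have hsum := eVariationOn.sum_le (f := L) (n := k) hmono hmem
    have hkey : ∀ j ∈ Finset.range k, edist (L (e (j+1))) (L (e j)) =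
        ENNReal.ofReal |L (c + ((j:ℝ)+1)*h + u) - L (c + (j:ℝ)*h + u)| := by
      intro j hj
      have hj' := Finset.mem_range.1 hj
      have e1 : e (j+1) = c + ((j:ℝ)+1)*h + u := by
        simp only [hedef, min_eq_left (Nat.succ_le_of_lt hj')]
        push_cast; ring
      have e2 : e j = c + (j:ℝ)*h + u := by
        simp only [hedef, min_eq_left hj'.le]
      rw [e1, e2, edist_dist, Real.dist_eq]
    rw [Finset.sum_congr rfl hkey,
      ← ENNReal.ofReal_sum_of_nonneg (fun i _ => abs_nonneg _)] at hsum
    rw [hWdef]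
    exact (ENNReal.ofReal_le_iff_le_toReal hfin).1 hsum
  -- integrability facts
  have hint : ∀ r : ℝ, IntervalIntegrable (fun u => L (r + u) * ρ n u) volume 0 δ := by
    intro r
    have hm : AEStronglyMeasurable (fun u => L (r+u) * ρ n u)
        (volume.restrict (Set.uIoc (0:ℝ) δ)) :=
      ((hLm.comp (measurable_const.add measurable_id)).mul hρc.measurable).aestronglyMeasurable
    refine IntervalIntegrable.mono_fun' ((continuous_const.mul hρc : Continuous fun u => B * ρ n u).intervalIntegrable 0 δ) hm ?_
    refine Filter.Eventually.of_forall fun u => ?_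
    simp only [Real.norm_eq_abs, abs_mul, abs_of_nonneg (hρ0 u)]
    exact mul_le_mul_of_nonneg_right (hB _) (hρ0 u)
  have hint2 : ∀ j : ℕ, IntervalIntegrable
      (fun u => |L (c + ((j:ℝ)+1)*h + u) - L (c + (j:ℝ)*h + u)| * ρ n u) volume 0 δ := by
    intro j
    have hm : AEStronglyMeasurable
        (fun u => |L (c + ((j:ℝ)+1)*h + u) - L (c + (j:ℝ)*h + u)| * ρ n u)
        (volume.restrict (Set.uIoc (0:ℝ) δ)) := by
      refine (Measurable.mul ?_ hρc.measurable).aestronglyMeasurable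
      exact ((hLm.comp (measurable_const.add measurable_id)).sub
        (hLm.comp (measurable_const.add measurable_id))).abs
    refine IntervalIntegrable.mono_fun' ((continuous_const.mul hρc : Continuous fun u => (B+B) * ρ n u).intervalIntegrable 0 δ) hm ?_
    refine Filter.Eventually.of_forall fun u => ?_
    have htri : |L (c + ((j:ℝ)+1)*h + u) - L (c + (j:ℝ)*h + u)| ≤ B + B := by
      calc |L (c + ((j:ℝ)+1)*h + u) - L (c + (j:ℝ)*h + u)|
          ≤ |L (c + ((j:ℝ)+1)*h + u)| + |L (c + (j:ℝ)*h + u)| := abs_sub _ _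
        _ ≤ B + B := add_le_add (hB _) (hB _)
    simp only [Real.norm_eq_abs, abs_mul, abs_abs, abs_of_nonneg (hρ0 u)]
    exact mul_le_mul_of_nonneg_right htri (hρ0 u)
  -- termwise bound
  set g : ℕ → ℝ → ℝ :=
    fun j u => |L (c + ((j:ℝ)+1)*h + u) - L (c + (j:ℝ)*h + u)| * ρ n u with hgdef
  have hint2' : ∀ j : ℕ, IntervalIntegrable (g j) volume 0 δ := hint2
  have hterm : ∀ j : ℕ,
      |mollL L ρ n (c + ((j:ℝ)+1)*h) - mollL L ρ n (c + (j:ℝ)*h)| ≤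
        ∫ u in (0:ℝ)..δ, g j u := by
    intro j
    have hdiff : mollL L ρ n (c + ((j:ℝ)+1)*h) - mollL L ρ n (c + (j:ℝ)*h) =
        ∫ u in (0:ℝ)..δ, (L (c + ((j:ℝ)+1)*h + u) - L (c + (j:ℝ)*h + u)) * ρ n u := by
      rw [mollL, mollL, ← hδdef, ← intervalIntegral.integral_sub (hint _) (hint _)]
      refine intervalIntegral.integral_congr fun u _ => ?_
      ring
    rw [hdiff]
    calc |∫ u in (0:ℝ)..δ, (L (c + ((j:ℝ)+1)*h + u) - L (c + (j:ℝ)*h + u)) * ρ n u|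
        ≤ ∫ u in (0:ℝ)..δ, |(L (c + ((j:ℝ)+1)*h + u) - L (c + (j:ℝ)*h + u)) * ρ n u| :=
          intervalIntegral.abs_integral_le_integral_abs hδ
      _ = ∫ u in (0:ℝ)..δ, g j u := by
          refine intervalIntegral.integral_congr fun u _ => ?_
          rw [hgdef]
          rw [abs_mul, abs_of_nonneg (hρ0 u)]
  have hgW : ∀ u ∈ Set.Icc (0:ℝ) δ, (∑ j ∈ Finset.range k, g j u) ≤ W * ρ n u := by
    intro u hu
    have hrw : ∑ j ∈ Finset.range k, g j u =
        (∑ j ∈ Finset.range k, |L (c + ((j:ℝ)+1)*h + u) - L (c + (j:ℝ)*h + u)|) * ρ n u := by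
      rw [hgdef, Finset.sum_mul]
    rw [hrw]
    exact mul_le_mul_of_nonneg_right (pointsum u hu) (hρ0 u)
  clear_value g
  have hsumint : IntervalIntegrable (fun u => ∑ j ∈ Finset.range k, g j u) volume 0 δ := by
    have h0 := IntervalIntegrable.sum (μ := volume) (a := (0:ℝ)) (b := δ)
      (Finset.range k) (f := g) (fun j _ => hint2' j)
    have hfe : (∑ j ∈ Finset.range k, g j) = fun u => ∑ j ∈ Finset.range k, g j u := by
      funext u; simp [Finset.sum_apply]
    rwa [hfe] at h0
  have s1 : ∑ j ∈ Finset.range k,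
        |mollL L ρ n (c + ((j:ℝ)+1)*h) - mollL L ρ n (c + (j:ℝ)*h)| ≤
      ∑ j ∈ Finset.range k, ∫ u in (0:ℝ)..δ, g j u := by
    refine Finset.sum_le_sum fun j _ => ?_
    exact hterm j
  have s2 : (∑ j ∈ Finset.range k, ∫ u in (0:ℝ)..δ, g j u) =
      ∫ u in (0:ℝ)..δ, ∑ j ∈ Finset.range k, g j u :=
    (intervalIntegral.integral_finset_sum (s := Finset.range k) fun j _ => hint2' j).symm
  have s3 : (∫ u in (0:ℝ)..δ, ∑ j ∈ Finset.range k, g j u) ≤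
      ∫ u in (0:ℝ)..δ, W * ρ n u :=
    intervalIntegral.integral_mono_on hδ hsumint
      ((continuous_const.mul hρc : Continuous fun u => W * ρ n u).intervalIntegrable 0 δ)
      hgW
  have s4 : (∫ u in (0:ℝ)..δ, W * ρ n u) = W := by
    rw [intervalIntegral.integral_const_mul, hρ1, mul_one]
  linarith


lemma aux_fcont {f : ℝ → ℝ → ℝ} {M : ℝ}
    (hlip : ∀ t s x y : ℝ, |f t x - f s y| ≤ M * (|t - s| + |x - y|)) :
    Continuous fun p : ℝ × ℝ => f p.1 p.2 := by
  have hM : 0 ≤ M := by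
    have h1 := hlip 0 1 0 0
    have h2 := abs_nonneg (f 0 0 - f 1 0)
    simp at h1
    linarith
  refine LipschitzWith.continuous (K := ⟨2 * M, by positivity⟩) ?_
  refine LipschitzWith.of_dist_le_mul fun p q => ?_
  have h1 : dist (f p.1 p.2) (f q.1 q.2) ≤ M * (|p.1 - q.1| + |p.2 - q.2|) := by
    rw [Real.dist_eq]; exact hlip _ _ _ _
  have h2 : |p.1 - q.1| ≤ dist p q := by
    rw [Prod.dist_eq]; rw [Real.dist_eq (p.1)]; exact le_max_left _ _
  have h3 : |p.2 - q.2| ≤ dist p q := by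
    rw [Prod.dist_eq]; rw [Real.dist_eq (p.2)]; exact le_max_right _ _
  have h4 : (0:ℝ) ≤ dist p q := dist_nonneg
  calc dist (f p.1 p.2) (f q.1 q.2) ≤ M * (|p.1 - q.1| + |p.2 - q.2|) := h1
    _ ≤ M * (dist p q + dist p q) := by nlinarith
    _ = (⟨2 * M, by positivity⟩ : NNReal) * dist p q := by push_cast; ring

set_option maxHeartbeats 1000000 in
lemma aux_fbound {f : ℝ → ℝ → ℝ} {M K : ℝ}
    (hlip : ∀ t s x y : ℝ, |f t x - f s y| ≤ M * (|t - s| + |x - y|))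
    (hgr : ∀ t x : ℝ, |f t x| ≤ K * (1 + |x|))
    {ρ₂ : ℕ → ℝ → ℝ → ℝ} {n : ℕ}
    (hc : Continuous fun p : ℝ × ℝ => ρ₂ n p.1 p.2)
    (h0 : ∀ u v, 0 ≤ ρ₂ n u v)
    (h1 : (∫ u in (0:ℝ)..(1/(n:ℝ)), ∫ v in (0:ℝ)..(1/(n:ℝ)), ρ₂ n u v) = 1)
    (hδ1 : 1/(n:ℝ) ≤ 1) :
    ∀ t x, |mollF f ρ₂ n t x| ≤ K * (2 + |x|) := by
  intro t x
  have K0 : 0 ≤ K := by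
    have := hgr 0 0
    have h2 := abs_nonneg (f 0 0)
    simp at this
    linarith
  have fcont : Continuous fun p : ℝ × ℝ => f p.1 p.2 := aux_fcont hlip
  set δ : ℝ := 1/(n:ℝ) with hδdef
  have hδ : 0 ≤ δ := by rw [hδdef]; positivity
  have Fcont : Continuous fun p : ℝ × ℝ => f (t + p.1) (x + p.2) * ρ₂ n p.1 p.2 := by
    refine Continuous.mul ?_ hc
    exact fcont.comp ((continuous_const.add continuous_fst).prodMk
      (continuous_const.add continuous_snd))
  set G : ℝ → ℝ := fun u => ∫ v in (0:ℝ)..δ, f (t + u) (x + v) * ρ₂ n u v with hGdef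
  set R : ℝ → ℝ := fun u => ∫ v in (0:ℝ)..δ, ρ₂ n u v with hRdef
  have hGcont : Continuous G :=
    intervalIntegral.continuous_parametric_intervalIntegral_of_continuous'
      (f := fun u v => f (t + u) (x + v) * ρ₂ n u v) Fcont 0 δ
  have hRcont : Continuous R :=
    intervalIntegral.continuous_parametric_intervalIntegral_of_continuous'
      (f := fun u v => ρ₂ n u v) hc 0 δ
  have hcu : ∀ u : ℝ, Continuous fun v => f (t + u) (x + v) * ρ₂ n u v := by
    intro u
    have : (fun v => f (t + u) (x + v) * ρ₂ n u v) =
        (fun p : ℝ × ℝ => f (t + p.1) (x + p.2) * ρ₂ n p.1 p.2) ∘ (fun v => (u, v)) := rfl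
    rw [this]
    exact Fcont.comp (by continuity)
  have hcu2 : ∀ u : ℝ, Continuous fun v => ρ₂ n u v := by
    intro u
    have : (fun v => ρ₂ n u v) =
        (fun p : ℝ × ℝ => ρ₂ n p.1 p.2) ∘ (fun v => (u, v)) := rfl
    rw [this]
    exact hc.comp (by continuity)
  have bound1 : ∀ u : ℝ, |G u| ≤ K * (2 + |x|) * R u := by
    intro u
    calc |G u| ≤ ∫ v in (0:ℝ)..δ, |f (t + u) (x + v) * ρ₂ n u v| :=
          intervalIntegral.abs_integral_le_integral_abs hδ
      _ ≤ ∫ v in (0:ℝ)..δ, K * (2 + |x|) * ρ₂ n u v := by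
          refine intervalIntegral.integral_mono_on hδ
            ((hcu u).abs.intervalIntegrable 0 δ)
            ((continuous_const.mul (hcu2 u) :
              Continuous fun v => K * (2 + |x|) * ρ₂ n u v).intervalIntegrable 0 δ)
            fun v hv => ?_
          rw [abs_mul, abs_of_nonneg (h0 u v)]
          refine mul_le_mul_of_nonneg_right ?_ (h0 u v)
          calc |f (t + u) (x + v)| ≤ K * (1 + |x + v|) := hgr _ _
            _ ≤ K * (2 + |x|) := by
                have hxv : |x + v| ≤ |x| + 1 := by
                  calc |x + v| ≤ |x| + |v| := abs_add_le _ _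
                    _ ≤ |x| + 1 := by
                        have : |v| = v := abs_of_nonneg hv.1
                        rw [this]
                        linarith [hv.2, hδ1, hδdef ▸ hv.2]
                nlinarith
      _ = K * (2 + |x|) * R u := by
          rw [intervalIntegral.integral_const_mul, hRdef]
  have hfinal : |mollF f ρ₂ n t x| ≤ K * (2 + |x|) := by
    have hmoll : mollF f ρ₂ n t x = ∫ u in (0:ℝ)..δ, G u := by
      rw [mollF, hGdef, hδdef]
    rw [hmoll]
    calc |∫ u in (0:ℝ)..δ, G u| ≤ ∫ u in (0:ℝ)..δ, |G u| :=
          intervalIntegral.abs_integral_le_integral_abs hδ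
      _ ≤ ∫ u in (0:ℝ)..δ, K * (2 + |x|) * R u :=
          intervalIntegral.integral_mono_on hδ
            (hGcont.abs.intervalIntegrable 0 δ)
            ((continuous_const.mul hRcont :
              Continuous fun u => K * (2 + |x|) * R u).intervalIntegrable 0 δ)
            (fun u _ => bound1 u)
      _ = K * (2 + |x|) := by
          rw [intervalIntegral.integral_const_mul]
          have : (∫ u in (0:ℝ)..δ, R u) = 1 := by
            rw [hRdef, hδdef]
            exact h1
          rw [this, mul_one]
  exact hfinal


lemma aux_tele (y : ℕ → ℝ) (m l : ℕ) :
    |y (m + l) - y m| ≤ ∑ i ∈ Finset.range l, |y (m + i + 1) - y (m + i)| := by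
  induction l with
  | zero => simp
  | succ l ih =>
    rw [Finset.sum_range_succ]
    have e1 : y (m + (l + 1)) - y m = (y (m + l + 1) - y (m + l)) + (y (m + l) - y m) := by
      have : m + (l + 1) = m + l + 1 := by omega
      rw [this]; ring
    calc |y (m + (l + 1)) - y m| ≤ |y (m + l + 1) - y (m + l)| + |y (m + l) - y m| := by
          rw [e1]; exact abs_add_le _ _
      _ ≤ _ := by linarith


set_option maxHeartbeats 1000000

/-- the increment bound
`|x_n(t + l h_n) - x_n(t)| ≤ C (1+|x_n^0(τ_t)|) V_t^{t + l h_n + 1/n} L` for the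
solutions of the difference scheme, with `C` depending only on `M`, `K`, `b-a` and
`V_a^b L`. -/
theorem scheme_solution_increment_bound :
    ∃ C : ℝ → ℝ → ℝ → ℝ → ℝ,
      ∀ (a b : ℝ), a < b →
      ∀ (L : ℝ → ℝ),
        (∀ t, ContinuousWithinAt L (Set.Ici t) t) →
        BoundedVariationOn L (Set.Icc a b) →
        (∀ t, t ≤ a → L t = L a) → (∀ t, b ≤ t → L t = L b) →
      ∀ (M K : ℝ) (f : ℝ → ℝ → ℝ),
        (∀ t s x y : ℝ, |f t x - f s y| ≤ M * (|t - s| + |x - y|)) →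
        (∀ t x : ℝ, |f t x| ≤ K * (1 + |x|)) →
      ∀ (ρ : ℕ → ℝ → ℝ), IsDeltaSeq ρ →
      ∀ (ρ₂ : ℕ → ℝ → ℝ → ℝ), IsDeltaSeq2 ρ₂ →
      ∀ (h : ℕ → ℝ), (∀ n, 0 < h n) → Tendsto h atTop (𝓝 0) →
      ∀ (xini X : ℕ → ℝ → ℝ),
        (∀ n, ∀ t ∈ Set.Ico a (a + h n), X n t = xini n t) →
        (∀ n, ∀ t : ℝ, a ≤ t → X n (t + h n) =
          X n t + mollF f ρ₂ n t (X n t) * (mollL L ρ n (t + h n) - mollL L ρ n t)) →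
      ∀ n : ℕ, ∀ t ∈ Set.Icc a b, ∀ l : ℕ, t + (l : ℝ) * h n ∈ Set.Icc a b →
        |X n (t + (l : ℝ) * h n) - X n t| ≤
          C M K (b - a) (eVariationOn L (Set.Icc a b)).toReal *
            (1 + |xini n (tauPt a (h n) t)|) *
            (eVariationOn L (Set.Icc t (t + (l : ℝ) * h n + 1 / (n : ℝ)))).toReal := by
  refine ⟨fun M K d V => 2 * K * Real.exp (2 * K * V), ?_⟩
  intro a b hab L hLrc hLbv hLa hLb M K f hlip hgr ρ hρ ρ₂ hρ₂ h hh hhlim xini X hXini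
    hXrec n t ht l htl
  have K0 : 0 ≤ K := by
    have h1 := hgr 0 0
    have h2 := abs_nonneg (f 0 0)
    simp at h1
    linarith
  set V : ℝ := (eVariationOn L (Set.Icc a b)).toReal with hVdef
  obtain ⟨hLmeas, hVu⟩ := aux_meas hab.le hLbv hLa hLb
  have hB := aux_Lbound hLbv hVu
  have hfin : ∀ c d : ℝ, eVariationOn L (Set.Icc c d) ≠ ⊤ :=
    fun c d => ne_top_of_le_ne_top hLbv ((eVariationOn.mono L (Set.subset_univ _)).trans hVu)
  have htoReal : ∀ c d : ℝ, (eVariationOn L (Set.Icc c d)).toReal ≤ V := by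
    intro c d
    rw [hVdef]
    exact ENNReal.toReal_mono hLbv ((eVariationOn.mono L (Set.subset_univ _)).trans hVu)
  rcases Nat.eq_zero_or_pos n with hn | hn
  · -- the case n = 0 : both mollifications vanish and the scheme is constant
    subst hn
    have hmz : ∀ s : ℝ, mollL L ρ 0 s = 0 := by
      intro s
      rw [mollL]
      norm_num
    have hstep : ∀ c : ℝ, a ≤ c → X 0 (c + h 0) = X 0 c := by
      intro c hc
      rw [hXrec 0 c hc, hmz, hmz]
      ring
    have hconst : ∀ l : ℕ, X 0 (t + (l : ℝ) * h 0) = X 0 t := by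
      intro l
      induction l with
      | zero => norm_num
      | succ l ih =>
        have hbc : a ≤ t + (l : ℝ) * h 0 := by
          have h1 := (hh 0).le
          have h2 := ht.1
          have h3 : (0:ℝ) ≤ (l:ℝ) := Nat.cast_nonneg l
          nlinarith
        have e1 : t + ((l : ℕ) + 1 : ℕ) * h 0 = (t + (l : ℝ) * h 0) + h 0 := by
          push_cast; ring
        rw [e1, hstep _ hbc, ih]
    rw [hconst l]
    simp only [sub_self, abs_zero]
    have h1 : (0:ℝ) ≤ 2 * K * Real.exp (2 * K * V) := by positivity
    have h2 : (0:ℝ) ≤ 1 + |xini 0 (tauPt a (h 0) t)| := by positivity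
    have h3 : (0:ℝ) ≤ (eVariationOn L (Set.Icc t (t + (l : ℝ) * h 0 + 1 / ((0:ℕ) : ℝ)))).toReal :=
      ENNReal.toReal_nonneg
    positivity
  · -- the main case n ≥ 1
    obtain ⟨hρcd, hρ0, hρsupp, hρ1⟩ := hρ n hn
    obtain ⟨hρ₂cd, hρ₂0, hρ₂supp, hρ₂1⟩ := hρ₂ n hn
    have hρc : Continuous (ρ n) := hρcd.continuous
    have hρ₂c : Continuous fun p : ℝ × ℝ => ρ₂ n p.1 p.2 := hρ₂cd.continuous
    have hδ1 : 1 / (n : ℝ) ≤ 1 := by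
      have h1 : (1:ℝ) ≤ (n:ℝ) := by exact_mod_cast hn
      rw [div_le_one (by linarith)]
      linarith
    have hFb : ∀ s z : ℝ, |mollF f ρ₂ n s z| ≤ 2 * K * (1 + |z|) := by
      intro s z
      calc |mollF f ρ₂ n s z| ≤ K * (2 + |z|) := aux_fbound hlip hgr hρ₂c hρ₂0 hρ₂1 hδ1 s z
        _ ≤ 2 * K * (1 + |z|) := by nlinarith [abs_nonneg z]
    obtain ⟨hτa, hτh, m, hm⟩ := aux_tau (hh n) ht.1
    set τ : ℝ := tauPt a (h n) t with hτdef
    set y : ℕ → ℝ := fun j => X n (τ + (j : ℝ) * h n) with hydef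
    set D : ℕ → ℝ := fun j =>
      |mollL L ρ n (τ + ((j : ℝ) + 1) * h n) - mollL L ρ n (τ + (j : ℝ) * h n)| with hDdef
    have hD0 : ∀ j, 0 ≤ D j := by
      intro j
      rw [hDdef]
      exact abs_nonneg _
    have hya : ∀ j : ℕ, a ≤ τ + (j : ℝ) * h n := by
      intro j
      have h1 : (0:ℝ) ≤ (j:ℝ) := Nat.cast_nonneg j
      nlinarith [(hh n).le]
    have hrec : ∀ j : ℕ, y (j + 1) = y j + mollF f ρ₂ n (τ + (j : ℝ) * h n) (y j) *
        (mollL L ρ n (τ + ((j : ℝ) + 1) * h n) - mollL L ρ n (τ + (j : ℝ) * h n)) := by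
      intro j
      have hx := hXrec n (τ + (j : ℝ) * h n) (hya j)
      have harg : τ + (j : ℝ) * h n + h n = τ + ((j : ℝ) + 1) * h n := by ring
      rw [harg] at hx
      have hcast : ((j + 1 : ℕ) : ℝ) = (j : ℝ) + 1 := by push_cast; ring
      simp only [hydef, hcast]
      exact hx
    have hstep2 : ∀ j, |y (j + 1) - y j| ≤ 2 * K * (1 + |y j|) * D j := by
      intro j
      rw [hrec j, add_sub_cancel_left, abs_mul, hDdef]
      exact mul_le_mul_of_nonneg_right (hFb _ _) (abs_nonneg _)
    have hstep1 : ∀ j, 1 + |y (j + 1)| ≤ (1 + |y j|) * (1 + 2 * K * D j) := by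
      intro j
      have h1 : |y (j + 1)| ≤ |y j| + 2 * K * (1 + |y j|) * D j := by
        have h2 := hstep2 j
        have h3 : |y (j+1)| ≤ |y j| + |y (j+1) - y j| := by
          have := abs_add_le (y j) (y (j+1) - y j)
          simpa using this
        linarith
      nlinarith [abs_nonneg (y j), hD0 j]
    have hSD : ∀ k : ℕ, ∑ i ∈ Finset.range k, D i ≤ V := by
      intro k
      have hs := aux_sumD hLmeas hB hρc hρ0 hρ1 (hh n).le τ k (hfin _ _)
      refine le_trans (le_of_eq ?_) (hs.trans (htoReal _ _))
      exact Finset.sum_congr rfl fun i _ => by rw [hDdef]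
    have grow : ∀ j : ℕ, 1 + |y j| ≤
        (1 + |y 0|) * Real.exp (2 * K * ∑ i ∈ Finset.range j, D i) := by
      intro j
      induction j with
      | zero => simp
      | succ j ih =>
        have e1 : 1 + 2 * K * D j ≤ Real.exp (2 * K * D j) := by
          have := Real.add_one_le_exp (2 * K * D j)
          linarith
        have h02 : (0:ℝ) ≤ 1 + 2 * K * D j := by nlinarith [hD0 j]
        calc 1 + |y (j + 1)| ≤ (1 + |y j|) * (1 + 2 * K * D j) := hstep1 j
          _ ≤ ((1 + |y 0|) * Real.exp (2 * K * ∑ i ∈ Finset.range j, D i)) *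
              Real.exp (2 * K * D j) := by
              refine mul_le_mul ih e1 h02 ?_
              positivity
          _ = (1 + |y 0|) * Real.exp (2 * K * ∑ i ∈ Finset.range (j + 1), D i) := by
              rw [Finset.sum_range_succ, mul_add, Real.exp_add]
              ring
    have hU : ∀ j : ℕ, 1 + |y j| ≤ (1 + |y 0|) * Real.exp (2 * K * V) := by
      intro j
      refine (grow j).trans ?_
      refine mul_le_mul_of_nonneg_left (Real.exp_le_exp.2 ?_) (by positivity)
      exact mul_le_mul_of_nonneg_left (hSD j) (by positivity)
    have hy0 : y 0 = xini n τ := by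
      have e0 : τ + ((0:ℕ) : ℝ) * h n = τ := by norm_num
      simp only [hydef, e0]
      exact hXini n τ ⟨hτa, hτh⟩
    have hterm2 : ∀ i ∈ Finset.range l, |y (m + i + 1) - y (m + i)| ≤
        (2 * K * (1 + |y 0|) * Real.exp (2 * K * V)) * D (m + i) := by
      intro i _
      have h1 := hstep2 (m + i)
      have h2 := hU (m + i)
      have h3 := hD0 (m + i)
      have h4 : (0:ℝ) ≤ 1 + |y 0| := by positivity
      have h5 : (0:ℝ) < Real.exp (2 * K * V) := Real.exp_pos _
      have h6 := mul_le_mul_of_nonneg_left h2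
        (mul_nonneg (mul_nonneg (by norm_num : (0:ℝ) ≤ 2) K0) h3)
      nlinarith [h1, h6]
    have hsum2 : ∑ i ∈ Finset.range l, D (m + i) ≤
        (eVariationOn L (Set.Icc t (t + (l : ℝ) * h n + 1 / (n : ℝ)))).toReal := by
      have hs := aux_sumD hLmeas hB hρc hρ0 hρ1 (hh n).le t l (hfin _ _)
      refine le_trans (le_of_eq ?_) hs
      refine Finset.sum_congr rfl fun i _ => ?_
      have e1 : τ + (((m + i : ℕ) : ℝ)) * h n = t + (i : ℝ) * h n := by
        rw [hm]; push_cast; ring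
      have e2 : τ + (((m + i : ℕ) : ℝ) + 1) * h n = t + ((i : ℝ) + 1) * h n := by
        rw [hm]; push_cast; ring
      simp only [hDdef]
      rw [e1, e2]
    have hXt : X n t = y m := by
      simp only [hydef]
      congr 1
    have hXtl : X n (t + (l : ℝ) * h n) = y (m + l) := by
      simp only [hydef]
      congr 1
      rw [hm]
      push_cast
      ring
    rw [hXt, hXtl]
    calc |y (m + l) - y m| ≤ ∑ i ∈ Finset.range l, |y (m + i + 1) - y (m + i)| :=
          aux_tele y m l
      _ ≤ ∑ i ∈ Finset.range l, (2 * K * (1 + |y 0|) * Real.exp (2 * K * V)) * D (m + i) :=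
          Finset.sum_le_sum hterm2
      _ = (2 * K * (1 + |y 0|) * Real.exp (2 * K * V)) * ∑ i ∈ Finset.range l, D (m + i) := by
          rw [← Finset.mul_sum]
      _ ≤ (2 * K * (1 + |y 0|) * Real.exp (2 * K * V)) *
          (eVariationOn L (Set.Icc t (t + (l : ℝ) * h n + 1 / (n : ℝ)))).toReal := by
          refine mul_le_mul_of_nonneg_left hsum2 ?_
          positivity
      _ = 2 * K * Real.exp (2 * K * V) * (1 + |xini n τ|) *
          (eVariationOn L (Set.Icc t (t + (l : ℝ) * h n + 1 / (n : ℝ)))).toReal := by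
          rw [hy0]
          ring

end
end

section
/- Let h_n > 0 with h_n → 0 and suppose h_n = o(1/n), i.e. n h_n → 0. Then for every δ ∈ (0,1) and every u ∈ [0,1], F_n(F_n^{−1}(u) − δ h_n) → u as n → ∞; that is, the limit function is σ(u) = u, independent of δ, so that the measure generated by σ is Lebesgue measure on [0,1]. -/
open MeasureTheory Filter Set Topology

noncomputable section

variable {ρ : ℝ → ℝ}

lemma myFn_cont (hρ : Continuous ρ) (n : ℕ) :
    Continuous (Fcdf (fun m t => (m : ℝ) * ρ ((m : ℝ) * t)) n) := by
  have hc : Continuous (fun t : ℝ => (n : ℝ) * ρ ((n : ℝ) * t)) := by fun_prop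
  have h1 := intervalIntegral.continuous_primitive
    (f := fun t : ℝ => (n : ℝ) * ρ ((n : ℝ) * t)) (μ := volume)
    (fun a b => hc.intervalIntegrable a b) (1 / (n:ℝ))
  have h2 : Fcdf (fun m t => (m : ℝ) * ρ ((m : ℝ) * t)) n
      = fun x => -(∫ s in (1/(n:ℝ))..x, (n : ℝ) * ρ ((n : ℝ) * s)) := by
    funext x; rw [Fcdf, intervalIntegral.integral_symm]
  rw [h2]; exact h1.neg

lemma myFn_diff (hρ : Continuous ρ) (n : ℕ) (a b : ℝ) :
    Fcdf (fun m t => (m : ℝ) * ρ ((m : ℝ) * t)) n a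
      - Fcdf (fun m t => (m : ℝ) * ρ ((m : ℝ) * t)) n b
      = ∫ s in a..b, (n : ℝ) * ρ ((n : ℝ) * s) := by
  have hc : Continuous (fun t : ℝ => (n : ℝ) * ρ ((n : ℝ) * t)) := by fun_prop
  have := intervalIntegral.integral_add_adjacent_intervals (a := a) (b := b) (c := 1/(n:ℝ)) (μ := volume)
    (hc.intervalIntegrable a b) (hc.intervalIntegrable b (1/(n:ℝ)))
  simp only [Fcdf]
  linarith

lemma myFn_anti (hρ : Continuous ρ) (hnn : ∀ s, 0 ≤ ρ s) (n : ℕ) {a b : ℝ} (hab : a ≤ b) :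
    Fcdf (fun m t => (m : ℝ) * ρ ((m : ℝ) * t)) n b
      ≤ Fcdf (fun m t => (m : ℝ) * ρ ((m : ℝ) * t)) n a := by
  have h := myFn_diff hρ n a b
  have h2 : (0:ℝ) ≤ ∫ s in a..b, (n : ℝ) * ρ ((n : ℝ) * s) :=
    intervalIntegral.integral_nonneg hab (fun s _ => mul_nonneg (Nat.cast_nonneg n) (hnn _))
  linarith

lemma myFn_zero (n : ℕ) :
    Fcdf (fun m t => (m : ℝ) * ρ ((m : ℝ) * t)) n (1/(n:ℝ)) = 0 := by
  simp [Fcdf]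

lemma myFn_one (hρint : (∫ s in (0 : ℝ)..1, ρ s) = 1) {n : ℕ} (hn : 1 ≤ n) :
    Fcdf (fun m t => (m : ℝ) * ρ ((m : ℝ) * t)) n 0 = 1 := by
  have hn0 : (n:ℝ) ≠ 0 := Nat.cast_ne_zero.mpr (by omega)
  have : Fcdf (fun m t => (m : ℝ) * ρ ((m : ℝ) * t)) n 0
      = (n:ℝ) • ∫ s in (0:ℝ)..(1/(n:ℝ)), ρ ((n:ℝ) * s) := by
    simp [Fcdf, intervalIntegral.integral_const_mul, smul_eq_mul]
  rw [this, intervalIntegral.smul_integral_comp_mul_left, mul_zero,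
    mul_one_div_cancel hn0, hρint]

lemma myFE_coe (n : ℕ) (y : ℝ) :
    FcdfE (fun m t => (m : ℝ) * ρ ((m : ℝ) * t)) n (y : EReal)
      = Fcdf (fun m t => (m : ℝ) * ρ ((m : ℝ) * t)) n y := by
  simp [FcdfE]

/-- for a δ-sequence of simplest type `ρ_n(t) = n ρ(n t)` and
`h_n = o(1/n)`, the quantity `F_n(F_n^{-1}(u) - δ h_n)` converges to `u` for every
`δ ∈ (0,1)` and every `u ∈ [0,1]`; the limit function `σ(u) = u` generates Lebesgue
measure on `[0,1]` and does not depend on `δ`. -/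
theorem Fn_limit_of_simplest_type_slow_h
    (ρ : ℝ → ℝ) (hρsmooth : ContDiff ℝ (⊤ : ℕ∞) ρ) (hρnn : ∀ s, 0 ≤ ρ s)
    (hρsupp : ∀ s, s ∉ Set.Icc (0 : ℝ) 1 → ρ s = 0)
    (hρint : (∫ s in (0 : ℝ)..1, ρ s) = 1)
    (h : ℕ → ℝ) (hh : ∀ n, 0 < h n) (hh0 : Tendsto h atTop (𝓝 0))
    (hslow : Tendsto (fun n : ℕ => (n : ℝ) * h n) atTop (𝓝 0)) :
    ∀ δ ∈ Set.Ioo (0 : ℝ) 1, ∀ u ∈ Set.Icc (0 : ℝ) 1,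
      Tendsto (fun n => FcdfE (fun m t => (m : ℝ) * ρ ((m : ℝ) * t)) n
          (FcdfInv (fun m t => (m : ℝ) * ρ ((m : ℝ) * t)) n u - ((δ * h n : ℝ) : EReal)))
        atTop (𝓝 u) := by
  intro δ hδ u hu
  have hρc : Continuous ρ := hρsmooth.continuous
  set ρn : ℕ → ℝ → ℝ := fun m t => (m : ℝ) * ρ ((m : ℝ) * t) with hρn
  rcases eq_or_lt_of_le hu.1 with h0 | hupos
  · -- u = 0 case
    have key : ∀ n : ℕ, FcdfE ρn n (FcdfInv ρn n u - ((δ * h n : ℝ) : EReal)) = u := by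
      intro n
      have htop : (⊤ : EReal) ∈ {x : EReal | FcdfE ρn n x = u} := by
        simp [FcdfE, ← h0]
      have hsup : FcdfInv ρn n u = ⊤ := top_le_iff.mp (le_sSup htop)
      rw [hsup, EReal.top_sub_coe]
      simp [FcdfE, ← h0]
    rw [tendsto_congr key]
    exact tendsto_const_nhds
  · -- 0 < u ≤ 1 case
    obtain ⟨M, hM0, hM⟩ : ∃ M : ℝ, 0 ≤ M ∧ ∀ s, ρ s ≤ M := by
      obtain ⟨M, hM⟩ := (isCompact_Icc (a := (0:ℝ)) (b := 1)).exists_bound_of_continuousOn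
        hρc.continuousOn
      refine ⟨max M 0, le_max_right _ _, fun s => ?_⟩
      by_cases hs : s ∈ Set.Icc (0:ℝ) 1
      · exact le_trans (le_trans (le_abs_self _) (hM s hs)) (le_max_left _ _)
      · rw [hρsupp s hs]; exact le_max_right _ _
    have key : ∀ n : ℕ, 1 ≤ n →
        u ≤ FcdfE ρn n (FcdfInv ρn n u - ((δ * h n : ℝ) : EReal)) ∧
        FcdfE ρn n (FcdfInv ρn n u - ((δ * h n : ℝ) : EReal))
          ≤ u + (δ * M) * ((n : ℝ) * h n) := by
      intro n hn
      have hnpos : (0:ℝ) < (n:ℝ) := by exact_mod_cast Nat.pos_of_ne_zero (by omega)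
      set g := Fcdf ρn n with hg
      have gcont : Continuous g := myFn_cont hρc n
      have ganti : ∀ {a b : ℝ}, a ≤ b → g b ≤ g a := fun hab => myFn_anti hρc hρnn n hab
      have g0 : g 0 = 1 := myFn_one hρint hn
      have g1 : g (1/(n:ℝ)) = 0 := myFn_zero n
      have hFE : ∀ y : ℝ, FcdfE ρn n (y : EReal) = g y := fun y => myFE_coe n y
      set T : Set ℝ := {x : ℝ | g x = u} with hT
      have hTne : T.Nonempty := by
        have hsub := intermediate_value_Icc' (by positivity : (0:ℝ) ≤ 1/(n:ℝ))
          gcont.continuousOn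
        have : u ∈ Set.Icc (g (1/(n:ℝ))) (g 0) := by rw [g0, g1]; exact ⟨hupos.le, hu.2⟩
        obtain ⟨x, _, hx⟩ := hsub this
        exact ⟨x, hx⟩
      have hTbdd : BddAbove T := by
        refine ⟨1/(n:ℝ), fun x hx => ?_⟩
        by_contra hxn
        push_neg at hxn
        have := ganti hxn.le
        rw [g1] at this
        have : g x = u := hx
        linarith [ganti hxn.le, g1 ▸ (ganti hxn.le)]
      have hTclosed : IsClosed T := isClosed_eq gcont continuous_const
      set xn := sSup T with hxn
      have hxT : g xn = u := hTclosed.csSup_mem hTne hTbdd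
      have hinv : FcdfInv ρn n u = (xn : EReal) := by
        apply le_antisymm
        · apply sSup_le
          intro y hy
          induction y using EReal.rec with
          | bot => exact bot_le
          | coe r =>
            have : g r = u := by rw [← hFE r]; exact hy
            exact EReal.coe_le_coe_iff.mpr (le_csSup hTbdd this)
          | top =>
            have : (0:ℝ) = u := by simpa [FcdfE] using hy
            linarith
        · exact le_sSup (by rw [Set.mem_setOf_eq, hFE]; exact hxT)
      have hexpr : FcdfE ρn n (FcdfInv ρn n u - ((δ * h n : ℝ) : EReal))
          = g (xn - δ * h n) := by
        rw [hinv, ← EReal.coe_sub, hFE]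
      rw [hexpr]
      have hdh : 0 < δ * h n := mul_pos hδ.1 (hh n)
      constructor
      · rw [← hxT]; exact ganti (by linarith)
      · have hdiff : g (xn - δ * h n) - g xn = ∫ s in (xn - δ * h n)..xn, (n : ℝ) * ρ ((n : ℝ) * s) :=
          myFn_diff hρc n (xn - δ * h n) xn
        have hbound : (∫ s in (xn - δ * h n)..xn, (n : ℝ) * ρ ((n : ℝ) * s))
            ≤ (δ * h n) * ((n:ℝ) * M) := by
          have hc : Continuous (fun t : ℝ => (n : ℝ) * ρ ((n : ℝ) * t)) := by fun_prop
          have := intervalIntegral.integral_mono_on (μ := volume)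
            (by linarith : xn - δ * h n ≤ xn)
            (hc.intervalIntegrable _ _)
            (intervalIntegrable_const (c := (n:ℝ) * M))
            (fun s _ => mul_le_mul_of_nonneg_left (hM _) (Nat.cast_nonneg n))
          rw [intervalIntegral.integral_const, smul_eq_mul] at this
          calc (∫ s in (xn - δ * h n)..xn, (n : ℝ) * ρ ((n : ℝ) * s))
              ≤ (xn - (xn - δ * h n)) * ((n:ℝ) * M) := this
            _ = (δ * h n) * ((n:ℝ) * M) := by ring_nf
        have : g (xn - δ * h n) - u ≤ (δ * h n) * ((n:ℝ) * M) := by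
          rw [← hxT]; linarith [hdiff]
        nlinarith []
    have hub : Tendsto (fun n : ℕ => u + (δ * M) * ((n : ℝ) * h n)) atTop (𝓝 u) := by
      have := (tendsto_const_nhds (x := u) (f := atTop (α := ℕ))).add
        (hslow.const_mul (δ * M))
      simpa using this
    refine tendsto_of_tendsto_of_tendsto_of_le_of_le' tendsto_const_nhds hub ?_ ?_
    · filter_upwards [eventually_ge_atTop 1] with n hn using (key n hn).1
    · filter_upwards [eventually_ge_atTop 1] with n hn using (key n hn).2
end
end
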